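/- arXiv:1004.4699 — 4 statements merged into one kernel-verified Lean document; each statement's English description precedes it below -/
import Mathlib

section
/- Let 0 → V₁ → V → V₂ → 0 be an exact sequence of finite-dimensional F-vector spaces compatible with an automorphism σ satisfying (σ-1)^2 = 0 on V. Let δ: V₂^σ → V₁/(σ-1)V₁ be the connecting map induced by the snake lemma for σ - 1. Then dim_F V/V^σ = dim_F V₁/V₁^σ + dim_F V₂/V₂^σ + dim_F Im(δ̄), where δ̄: V₂^σ/(σ-1)V₂ → V₁/(σ-1)V₁ is the map induced by δ. -/
lemma aux_finrank_map_mkQ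
    (F V : Type*) [Field F] [AddCommGroup V] [Module F V] [FiniteDimensional F V]
    (U W : Submodule F V) :
    Module.finrank F (Submodule.map U.mkQ W) + Module.finrank F (U ⊓ W : Submodule F V)
      = Module.finrank F W := by
  let g : W →ₗ[F] V ⧸ U := U.mkQ.comp W.subtype
  have hrange : LinearMap.range g = Submodule.map U.mkQ W := by
    rw [LinearMap.range_comp, Submodule.range_subtype]
  have hker : LinearMap.ker g = Submodule.comap W.subtype (U ⊓ W) := by
    rw [LinearMap.ker_comp, Submodule.ker_mkQ]
    ext x
    simp [x.2]
  have e1 : Module.finrank F (LinearMap.ker g) = Module.finrank F (U ⊓ W : Submodule F V) := by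
    rw [hker]
    exact LinearEquiv.finrank_eq (Submodule.comapSubtypeEquivOfLe inf_le_right)
  have := LinearMap.finrank_range_add_finrank_ker g
  rw [hrange, e1] at this
  rw [this]

/-- Conductor additivity with snake-lemma correction term.  Let `V` be a finite-dimensional
`F`-vector space, `σ` an automorphism with `(σ - 1)^2 = 0`, and `V₁` a `σ`-stable subspace,
`V₂ = V/V₁`.  Writing `f = σ - 1`, one has
`dim V/V^σ = dim V₁/V₁^σ + dim V₂/V₂^σ + dim Im δ̄`, where:
`dim V/V^σ = finrank (V ⧸ ker f)`; `dim V₁/V₁^σ = finrank (f(V₁))` (rank of `f` on `V₁`);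
`dim V₂/V₂^σ = finrank (image of range f in V/V₁)` (rank of the induced map on `V₂`); and
`Im δ̄` is the image of `(range f) ∩ V₁` in `V₁/(σ-1)V₁`, realized as the image of
`range f ⊓ V₁` in `V ⧸ f(V₁)`. -/
theorem snake_conductor_formula
    (F V : Type*) [Field F] [AddCommGroup V] [Module F V] [FiniteDimensional F V]
    (σ : V ≃ₗ[F] V) (V₁ : Submodule F V)
    (hstab : Submodule.map σ.toLinearMap V₁ = V₁)
    (f : V →ₗ[F] V) (hf : f = σ.toLinearMap - LinearMap.id)
    (hnil : f ∘ₗ f = 0) :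
    Module.finrank F (V ⧸ LinearMap.ker f) =
      Module.finrank F (Submodule.map f V₁)
        + Module.finrank F (Submodule.map V₁.mkQ (LinearMap.range f))
        + Module.finrank F
            (Submodule.map (Submodule.map f V₁).mkQ (LinearMap.range f ⊓ V₁)) := by
  have hV₁ : Submodule.map f V₁ ≤ V₁ := by
    rintro _ ⟨x, hx, rfl⟩
    rw [hf]
    have : σ x ∈ V₁ := hstab ▸ Submodule.mem_map_of_mem hx
    simpa using Submodule.sub_mem V₁ this hx
  have hR : Submodule.map f V₁ ≤ LinearMap.range f := LinearMap.map_le_range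
  have hL : Module.finrank F (V ⧸ LinearMap.ker f)
      = Module.finrank F (LinearMap.range f) :=
    LinearEquiv.finrank_eq f.quotKerEquivRange
  have h1 := aux_finrank_map_mkQ F V V₁ (LinearMap.range f)
  have h2 := aux_finrank_map_mkQ F V (Submodule.map f V₁) (LinearMap.range f ⊓ V₁)
  have hinf : Submodule.map f V₁ ⊓ (LinearMap.range f ⊓ V₁) = Submodule.map f V₁ :=
    inf_eq_left.mpr (le_inf hR hV₁)
  rw [hinf] at h2
  have hcomm : (V₁ ⊓ LinearMap.range f : Submodule F V)
      = LinearMap.range f ⊓ V₁ := inf_comm _ _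
  rw [hcomm] at h1
  omega
end

section
/- Let G be a finite group, F a field of characteristic 2 (more generally any field), W a finite-dimensional F[G]-module with 𝔞 the augmentation ideal of F[G], and W_k = {x ∈ W : 𝔞^k x = 0} the associated filtration. Fix k ≥ 0 and let H = {h ∈ G : (h-1)(W_{k+2}) ⊆ W_k}. Then G/H is an elementary abelian 2-group (when G is a 2-group), say of rank r, and dim_F W_{k+2}/W_{k+1} ≤ r · dim_F W_{k+1}/W_k. -/
/-!
For `x ∈ W_{k+2}` the map `g ↦ (g - 1)x mod W_k` is a homomorphism `ψ_x` from `G` to the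
additive group of `W_{k+1}/W_k`, because `gh - 1 = (g - 1)(h - 1) + (g - 1) + (h - 1)` and the
first summand maps `W_{k+2}` into `W_k`. Hence `H`, the common kernel of all `ψ_x`, is the
kernel of a homomorphism into an abelian group of exponent 2 (characteristic 2), which gives
normality, the squares and the commutators. If `G/H` has order `2^r` it is an `𝔽₂`-space of
dimension `r`, so it is generated by `r` elements; a vector `x` whose `ψ_x` kills these
generators has `ψ_x = 0`, i.e. `x ∈ W_{k+1}`. Thus `W_{k+2}/W_{k+1}` embeds into
`(W_{k+1}/W_k)^r`.
-/

/-- The filtration `W_k = {x ∈ W : 𝔞^k x = 0}` associated to the augmentation ideal `𝔞` of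
`F[G]`: since `𝔞` is generated by the elements `g - 1`, the condition `𝔞^k x = 0` is that
every product `(g₁-1)⋯(g_k-1)` annihilates `x`. -/
def augFiltration {F G W : Type*} [CommRing F] [Group G] [AddCommGroup W] [Module F W]
    (ρ : Representation F G W) (k : ℕ) : Submodule F W where
  carrier := {x | ∀ l : List G, l.length = k →
    (l.map fun g => (ρ g - 1 : Module.End F W)).prod x = 0}
  add_mem' := by
    intro a b ha hb l hl
    simp [map_add, ha l hl, hb l hl]
  zero_mem' := by intro l hl; simp
  smul_mem' := by
    intro c a ha l hl
    simp [map_smul, ha l hl]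

open Module LinearMap

section Filtration

variable {F G W : Type*} [CommRing F] [Group G] [AddCommGroup W] [Module F W]
  (ρ : Representation F G W)

theorem mem_augFiltration_succ_iff {m : ℕ} {x : W} :
    x ∈ augFiltration ρ (m + 1) ↔ ∀ g : G, ρ g x - x ∈ augFiltration ρ m := by
  constructor
  · intro hx g l hl
    simpa [List.prod_concat, Module.End.mul_apply] using hx (l.concat g) (by simp [hl])
  · intro hx l hl
    rcases List.eq_nil_or_concat l with rfl | ⟨l', g, rfl⟩
    · simp at hl
    · simpa [List.prod_concat, Module.End.mul_apply] using hx g l' (by simpa using hl)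

abbrev augGraded (m : ℕ) : Type _ :=
  ↥(augFiltration ρ (m + 1)) ⧸ (augFiltration ρ m).comap (augFiltration ρ (m + 1)).subtype

def augDiff (g : G) (m : ℕ) : augFiltration ρ (m + 1) →ₗ[F] augFiltration ρ m :=
  (ρ g - 1).restrict fun _ hx => (mem_augFiltration_succ_iff ρ).mp hx g

theorem augDiff_apply (g : G) (m : ℕ) (x : augFiltration ρ (m + 1)) :
    (augDiff ρ g m x : W) = ρ g x - x := rfl

def augSymbol (m : ℕ) :
    G →* Multiplicative (augFiltration ρ (m + 2) →ₗ[F] augGraded ρ m) where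
  toFun g := .ofAdd <| ((augFiltration ρ m).comap (augFiltration ρ (m + 1)).subtype).mkQ ∘ₗ
    augDiff ρ g (m + 1)
  map_one' := by ext x; simp [augDiff]
  map_mul' g h := congrArg Multiplicative.ofAdd <| LinearMap.ext fun x =>
    (Submodule.Quotient.eq _).mpr <| by
      have hdiff := (mem_augFiltration_succ_iff ρ).mp (augDiff ρ h (m + 1) x).2 g
      simp only [Submodule.mem_comap, Submodule.subtype_apply, Submodule.coe_sub,
        Submodule.coe_add, augDiff_apply] at hdiff ⊢
      convert hdiff using 1
      simp only [map_mul, Module.End.mul_apply, map_sub]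
      abel

theorem augSymbol_apply_eq_zero_iff {m : ℕ} (g : G) (x : augFiltration ρ (m + 2)) :
    (augSymbol ρ m g).toAdd x = 0 ↔ ρ g x - x ∈ augFiltration ρ m :=
  Submodule.Quotient.mk_eq_zero _

theorem mem_augFiltration_succ_iff_augSymbol {m : ℕ} (x : augFiltration ρ (m + 2)) :
    (x : W) ∈ augFiltration ρ (m + 1) ↔ ∀ g : G, (augSymbol ρ m g).toAdd x = 0 := by
  simp only [augSymbol_apply_eq_zero_iff, mem_augFiltration_succ_iff]

theorem mem_ker_augSymbol {m : ℕ} {g : G} :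
    g ∈ (augSymbol ρ m).ker ↔
      ∀ x ∈ augFiltration ρ (m + 2), ρ g x - x ∈ augFiltration ρ m := by
  simp only [MonoidHom.mem_ker, ← toAdd_eq_zero, LinearMap.ext_iff, LinearMap.zero_apply,
    augSymbol_apply_eq_zero_iff, Subtype.forall]

theorem augSymbol_mul_self [CharP F 2] {m : ℕ} (g : G) : augSymbol ρ m (g * g) = 1 := by
  rw [map_mul, ← toAdd_eq_zero, toAdd_mul, ← two_smul F (augSymbol ρ m g).toAdd,
    CharTwo.two_eq_zero (R := F), zero_smul]

end Filtration

theorem exists_closure_range_eq_top_of_mul_self {A : Type*} [CommGroup A] {r : ℕ}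
    (hA : ∀ a : A, a * a = 1) (hcard : Nat.card A = 2 ^ r) :
    ∃ t : Fin r → A, Subgroup.closure (Set.range t) = ⊤ := by
  have : Finite A := Nat.finite_of_card_ne_zero (by simp [hcard])
  let : Fintype (Additive A) := Fintype.ofFinite _
  let : Module (ZMod 2) (Additive A) :=
    AddCommGroup.zmodModule fun a => by rw [two_nsmul]; exact hA a.toMul
  have hrank : finrank (ZMod 2) (Additive A) = r := by
    have hcard' := Module.card_eq_pow_finrank (K := ZMod 2) (V := Additive A)
    rw [ZMod.card, ← Nat.card_eq_fintype_card, Nat.card_congr Additive.toMul, hcard] at hcard'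
    exact (Nat.pow_right_injective le_rfl hcard').symm
  let b := Module.finBasisOfFinrankEq (ZMod 2) (Additive A) hrank
  let t : Fin r → A := fun i => (b i).toMul
  refine ⟨t, eq_top_iff.mpr fun a _ => ?_⟩
  have hspan : Submodule.span (ZMod 2) (Set.range b) ≤
      AddSubgroup.toZModSubmodule 2 (Subgroup.toAddSubgroup (Subgroup.closure (Set.range t))) :=
    Submodule.span_le.mpr <| Set.range_subset_iff.mpr fun i =>
      show t i ∈ Subgroup.closure (Set.range t) from Subgroup.subset_closure ⟨i, rfl⟩
  exact hspan (b.span_eq ▸ Submodule.mem_top : Additive.ofMul a ∈ _)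

theorem finrank_quotient_le_card_mul_finrank {K V Q ι : Type*} [DivisionRing K]
    [AddCommGroup V] [Module K V] [AddCommGroup Q] [Module K Q] [FiniteDimensional K Q]
    [Fintype ι] {p : Submodule K V} (f : ι → V →ₗ[K] Q)
    (hp : ∀ x, (∀ i, f i x = 0) → x ∈ p) :
    finrank K (V ⧸ p) ≤ Fintype.card ι * finrank K Q := by
  set π := LinearMap.pi f
  have hle : ker π ≤ p := fun x hx => hp x fun i => congr_fun (mem_ker.mp hx) i
  have hinj : Function.Injective (π.ker.liftQ π le_rfl) := by
    rw [← ker_eq_bot]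
    exact Submodule.ker_liftQ_eq_bot _ _ _ le_rfl
  have := Module.Finite.of_injective _ hinj
  calc finrank K (V ⧸ p) ≤ finrank K (V ⧸ ker π) :=
        finrank_le_finrank_of_surjective (Submodule.factor_surjective hle)
    _ ≤ finrank K (ι → Q) := finrank_le_finrank_of_injective hinj
    _ = Fintype.card ι * finrank K Q := by
      rw [finrank_pi_fintype, Finset.sum_const, Finset.card_univ, smul_eq_mul]

theorem augFiltration_growth_bound_general
    (F G W : Type*) [Field F] [CharP F 2] [Group G]
    [AddCommGroup W] [Module F W] [FiniteDimensional F W]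
    (ρ : Representation F G W) (k : ℕ)
    (H : Subgroup G)
    (hH : ∀ h : G, h ∈ H ↔ ∀ x ∈ augFiltration ρ (k + 2), ρ h x - x ∈ augFiltration ρ k) :
    (∀ g h : G, h ∈ H → g * h * g⁻¹ ∈ H) ∧
    (∀ g : G, g * g ∈ H) ∧
    (∀ g₁ g₂ : G, g₁ * g₂ * g₁⁻¹ * g₂⁻¹ ∈ H) ∧
    ∀ r : ℕ, Nat.card (G ⧸ H) = 2 ^ r →
      Module.finrank F
          (↥(augFiltration ρ (k + 2)) ⧸
            (augFiltration ρ (k + 1)).comap (augFiltration ρ (k + 2)).subtype) ≤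
        r * Module.finrank F
          (↥(augFiltration ρ (k + 1)) ⧸
            (augFiltration ρ k).comap (augFiltration ρ (k + 1)).subtype) := by
  obtain rfl : H = (augSymbol ρ k).ker :=
    Subgroup.ext fun h => (hH h).trans (mem_ker_augSymbol ρ).symm
  refine ⟨fun g h hh => (augSymbol ρ k).normal_ker.conj_mem h hh g,
    fun g => augSymbol_mul_self ρ g, fun g₁ g₂ => ?_, fun r hr => ?_⟩
  · rw [← commutatorElement_def]
    exact Abelianization.commutator_subset_ker _
      (Subgroup.commutator_mem_commutator (Subgroup.mem_top _) (Subgroup.mem_top _))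
  obtain ⟨t, ht⟩ := exists_closure_range_eq_top_of_mul_self (A := (augSymbol ρ k).range)
    (by rintro ⟨_, g, rfl⟩
        exact Subtype.ext <| (map_mul _ g g).symm.trans (augSymbol_mul_self ρ g))
    ((Nat.card_congr (QuotientGroup.quotientKerEquivRange _).toEquiv).symm.trans hr)
  have hvanish : ∀ x, (∀ i, (t i).1.toAdd x = 0) →
      x ∈ (augFiltration ρ (k + 1)).comap (augFiltration ρ (k + 2)).subtype := by
    intro x hx
    have hclosure : ∀ a ∈ Subgroup.closure (Set.range t), a.1.toAdd x = 0 :=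
      fun a ha => Subgroup.closure_induction (fun _ ⟨i, hi⟩ => hi ▸ hx i) (by simp)
        (fun _ _ _ _ h₁ h₂ => by simp [h₁, h₂]) (fun _ _ h => by simp [h]) ha
    exact (mem_augFiltration_succ_iff_augSymbol ρ x).mpr fun g =>
      hclosure ⟨_, g, rfl⟩ (ht ▸ Subgroup.mem_top _)
  simpa only [Fintype.card_fin] using
    finrank_quotient_le_card_mul_finrank (fun i => (t i).1.toAdd) hvanish

/-- Let `G` be a finite 2-group, `F` a field of characteristic 2, `W` a finite-dimensional
`F[G]`-module with augmentation filtration `W_k`, and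
`H = {h ∈ G : (h-1)(W_{k+2}) ⊆ W_k}`.  Then `G/H` is elementary abelian (`H` is normal,
every square lies in `H` and every commutator lies in `H`), and if it has rank `r`
(i.e. `|G/H| = 2^r`) then `dim_F W_{k+2}/W_{k+1} ≤ r · dim_F W_{k+1}/W_k`. -/
theorem augFiltration_growth_bound
    (F G W : Type*) [Field F] [CharP F 2] [Group G] [Finite G]
    (hG : IsPGroup 2 G)
    [AddCommGroup W] [Module F W] [FiniteDimensional F W]
    (ρ : Representation F G W) (k : ℕ)
    (H : Subgroup G)
    (hH : ∀ h : G, h ∈ H ↔ ∀ x ∈ augFiltration ρ (k + 2), ρ h x - x ∈ augFiltration ρ k) :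
    (∀ g h : G, h ∈ H → g * h * g⁻¹ ∈ H) ∧
    (∀ g : G, g * g ∈ H) ∧
    (∀ g₁ g₂ : G, g₁ * g₂ * g₁⁻¹ * g₂⁻¹ ∈ H) ∧
    ∀ r : ℕ, Nat.card (G ⧸ H) = 2 ^ r →
      Module.finrank F
          (↥(augFiltration ρ (k + 2)) ⧸
            (augFiltration ρ (k + 1)).comap (augFiltration ρ (k + 2)).subtype) ≤
        r * Module.finrank F
          (↥(augFiltration ρ (k + 1)) ⧸
            (augFiltration ρ k).comap (augFiltration ρ (k + 1)).subtype) :=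
  augFiltration_growth_bound_general F G W ρ k H hH
end

section
/- Let W be a module over F[G] (F a field of characteristic 2, G a 2-group) with filtration W_k = {x : 𝔞^k x = 0} where 𝔞 is the augmentation ideal. Suppose the maximal quotient 𝔊 of G acting faithfully on W_3 is abelian, and suppose there is an involution g in 𝔊 with W_2^{⟨g⟩} = W_1 (the g-fixed points of W_2 equal W_1). Then W_3 = W_2. -/
/-- Let `W` be an `F[G]`-module (`char F = 2`, `G` a 2-group) with augmentation filtration
`W_k`.  Suppose the maximal quotient of `G` acting faithfully on `W₃` is abelian (i.e. the
actions of any two elements of `G` commute on `W₃`), and there is an involution `g` (acting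
with square the identity on `W₃`) whose fixed points on `W₂` are exactly `W₁`.  Then
`W₃ = W₂`. -/
theorem augFiltration_three_eq_two_of_involution
    (F G W : Type*) [Field F] [CharP F 2] [Group G] [Finite G]
    (hG : IsPGroup 2 G)
    [AddCommGroup W] [Module F W]
    (ρ : Representation F G W)
    (habel : ∀ g h : G, ∀ x ∈ augFiltration ρ 3, ρ g (ρ h x) = ρ h (ρ g x))
    (g : G)
    (hinv : ∀ x ∈ augFiltration ρ 3, ρ g (ρ g x) = x)
    (hfix : ∀ x ∈ augFiltration ρ 2, (ρ g x = x ↔ x ∈ augFiltration ρ 1)) :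
    augFiltration ρ 3 = augFiltration ρ 2 := by
  -- char 2: negation is the identity on W
  have hneg : ∀ y : W, -y = y := by
    intro y
    have hy : y + y = 0 := by
      have h := two_smul F y
      rw [show ((2:F)) = 0 from CharP.cast_eq_zero F 2, zero_smul] at h
      exact h.symm
    exact neg_eq_of_add_eq_zero_left hy
  ext x
  constructor
  · intro hx
    -- key: for every h, (h-1)x ∈ W₁
    have hW2 : ∀ h : G, ρ h x - x ∈ augFiltration ρ 2 := by
      intro h l hl
      have h3 := hx (l ++ [h]) (by simp [hl])
      simpa [List.prod_append, Module.End.mul_apply, map_sub] using h3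
    have hW1mem : ∀ y, y ∈ augFiltration ρ 1 → ∀ k : G, ρ k y = y := by
      intro y hy k
      have := hy [k] rfl
      simp [LinearMap.sub_apply] at this
      exact sub_eq_zero.mp this
    set z := ρ g x - x with hzdef
    have hzfix : ρ g z = z := by
      rw [hzdef, map_sub, hinv x hx, ← hneg (ρ g x - x)]
      abel
    have hz1 : z ∈ augFiltration ρ 1 := (hfix z (hW2 g)).mp hzfix
    have hW1 : ∀ h : G, ρ h x - x ∈ augFiltration ρ 1 := by
      intro h
      apply (hfix _ (hW2 h)).mp
      have hc := habel g h x hx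
      have hz : ρ h z = z := hW1mem z hz1 h
      rw [hzdef, map_sub] at hz
      rw [map_sub, hc]
      rw [sub_eq_iff_eq_add] at hz
      rw [hz]
      abel
    -- conclude x ∈ W₂
    intro l hl
    match l, hl with
    | [a, b], _ =>
      have := hW1 b [a] rfl
      simp only [List.map_cons, List.map_nil, List.prod_cons, List.prod_nil, mul_one,
        Module.End.mul_apply, LinearMap.sub_apply, Module.End.one_apply, map_sub] at this ⊢
      simpa [map_sub] using this
  · intro hx l hl
    match l, hl with
    | [a, b, c], _ =>
      have := hx [b, c] rfl
      simp only [List.map_cons, List.map_nil, List.prod_cons, List.prod_nil, mul_one,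
        Module.End.mul_apply] at this ⊢
      rw [this, map_zero]
end

section
/- Let W be an F[G]-module (char F = 2, G a 2-group) with filtration W_k as above. If the maximal quotient 𝔊 of G acting faithfully on W_3 is elementary abelian and dim_F W_2/W_1 = 1, then W_3 = W_2. -/
lemma mem_aug1 {F G W : Type*} [CommRing F] [Group G] [AddCommGroup W] [Module F W]
    (ρ : Representation F G W) {x : W} :
    x ∈ augFiltration ρ 1 ↔ ∀ g : G, (ρ g - 1 : Module.End F W) x = 0 := by
  constructor
  · intro hx g; simpa using hx [g] rfl
  · intro hx l hl
    rcases l with _ | ⟨g, l⟩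
    · simp at hl
    rcases l with _ | ⟨h, l⟩
    · simpa using hx g
    · simp at hl

lemma mem_aug2 {F G W : Type*} [CommRing F] [Group G] [AddCommGroup W] [Module F W]
    (ρ : Representation F G W) {x : W} :
    x ∈ augFiltration ρ 2 ↔
      ∀ g h : G, (ρ g - 1 : Module.End F W) ((ρ h - 1 : Module.End F W) x) = 0 := by
  constructor
  · intro hx g h; simpa using hx [g, h] rfl
  · intro hx l hl
    rcases l with _ | ⟨g, l⟩
    · simp at hl
    rcases l with _ | ⟨h, l⟩
    · simp at hl
    rcases l with _ | ⟨k, l⟩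
    · simpa using hx g h
    · simp at hl

lemma mem_aug3 {F G W : Type*} [CommRing F] [Group G] [AddCommGroup W] [Module F W]
    (ρ : Representation F G W) {x : W} :
    x ∈ augFiltration ρ 3 ↔
      ∀ g h k : G, (ρ g - 1 : Module.End F W)
        ((ρ h - 1 : Module.End F W) ((ρ k - 1 : Module.End F W) x)) = 0 := by
  constructor
  · intro hx g h k; simpa using hx [g, h, k] rfl
  · intro hx l hl
    rcases l with _ | ⟨g, l⟩
    · simp at hl
    rcases l with _ | ⟨h, l⟩
    · simp at hl
    rcases l with _ | ⟨k, l⟩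
    · simp at hl
    rcases l with _ | ⟨m, l⟩
    · simpa using hx g h k
    · simp at hl

/-- Let `W` be an `F[G]`-module (`char F = 2`, `G` a 2-group) with augmentation filtration
`W_k`.  If the maximal quotient of `G` acting faithfully on `W₃` is elementary abelian
(i.e. the actions of elements of `G` on `W₃` commute pairwise and square to the identity),
and `dim_F W₂/W₁` = 1`, then `W₃ = W₂`. -/
theorem augFiltration_three_eq_two_of_elementary_abelian
    (F G W : Type*) [Field F] [CharP F 2] [Group G] [Finite G]
    (hG : IsPGroup 2 G)
    [AddCommGroup W] [Module F W] [FiniteDimensional F W]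
    (ρ : Representation F G W)
    (habel : ∀ g h : G, ∀ x ∈ augFiltration ρ 3, ρ g (ρ h x) = ρ h (ρ g x))
    (hsq : ∀ g : G, ∀ x ∈ augFiltration ρ 3, ρ g (ρ g x) = x)
    (hdim : Module.finrank F
        (↥(augFiltration ρ 2) ⧸ (augFiltration ρ 1).comap (augFiltration ρ 2).subtype)
      = 1) :
    augFiltration ρ 3 = augFiltration ρ 2 := by
  have h2 : ∀ w : W, w + w = 0 := by
    intro w
    have h20 : (2 : F) = 0 := by exact_mod_cast CharP.cast_eq_zero F 2
    calc w + w = (2 : F) • w := (two_smul F w).symm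
    _ = 0 := by rw [h20, zero_smul]
  apply le_antisymm
  · -- W3 ≤ W2
    intro x hx
    have hx3 := (mem_aug3 ρ).mp hx
    -- square lemma: (ρ g - 1)^2 x = 0
    have hsq0 : ∀ g : G, (ρ g - 1 : Module.End F W) ((ρ g - 1 : Module.End F W) x) = 0 := by
      intro g
      simp only [LinearMap.sub_apply, Module.End.one_apply, map_sub]
      rw [hsq g x hx]
      have : x - ρ g x - (ρ g x - x) = (x + x) - (ρ g x + ρ g x) := by abel
      rw [this, h2, h2, sub_zero]
    -- commutation lemma
    have hcomm0 : ∀ g k : G, (ρ g - 1 : Module.End F W) ((ρ k - 1 : Module.End F W) x)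
        = (ρ k - 1 : Module.End F W) ((ρ g - 1 : Module.End F W) x) := by
      intro g k
      simp only [LinearMap.sub_apply, Module.End.one_apply, map_sub]
      rw [habel g k x hx]
      abel
    rw [mem_aug2]
    suffices hsuff : ∀ h : G, (ρ h - 1 : Module.End F W) x ∈ augFiltration ρ 1 by
      intro g h
      exact (mem_aug1 ρ).mp (hsuff h) g
    intro h
    by_contra hy
    set y : W := (ρ h - 1 : Module.End F W) x with hydef
    have hyW2 : y ∈ augFiltration ρ 2 := (mem_aug2 ρ).mpr fun a b => hx3 a b h
    set p := (augFiltration ρ 1).comap (augFiltration ρ 2).subtype with hp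
    set Y : ↥(augFiltration ρ 2) := ⟨y, hyW2⟩ with hY
    have hY0 : (Submodule.Quotient.mk Y : _ ⧸ p) ≠ 0 := by
      intro h0
      exact hy ((Submodule.Quotient.mk_eq_zero p).mp h0)
    have hspan : Submodule.span F {(Submodule.Quotient.mk Y : _ ⧸ p)} = ⊤ :=
      (finrank_eq_one_iff_of_nonzero _ hY0).mp hdim
    apply hy
    rw [mem_aug1]
    intro k
    have hzW2 : (ρ k - 1 : Module.End F W) x ∈ augFiltration ρ 2 :=
      (mem_aug2 ρ).mpr fun a b => hx3 a b k
    set Z : ↥(augFiltration ρ 2) := ⟨(ρ k - 1 : Module.End F W) x, hzW2⟩ with hZ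
    have hmem : (Submodule.Quotient.mk Z : _ ⧸ p) ∈
        Submodule.span F {(Submodule.Quotient.mk Y : _ ⧸ p)} := by
      rw [hspan]; trivial
    obtain ⟨c, hc⟩ := Submodule.mem_span_singleton.mp hmem
    have hw : (Z : ↥(augFiltration ρ 2)) - c • Y ∈ p := by
      rw [← Submodule.Quotient.mk_eq_zero, Submodule.Quotient.mk_sub,
        Submodule.Quotient.mk_smul, hc, sub_self]
    have hwW1 : ((ρ k - 1 : Module.End F W) x) - c • y ∈ augFiltration ρ 1 := hw
    -- compute (ρ k - 1) y
    have key2 : (ρ k - 1 : Module.End F W) y = (ρ h - 1 : Module.End F W)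
        ((ρ k - 1 : Module.End F W) x) := hcomm0 k h
    rw [key2]
    have hdecomp : (ρ k - 1 : Module.End F W) x
        = c • y + (((ρ k - 1 : Module.End F W) x) - c • y) := by abel
    rw [hdecomp, map_add, map_smul, hsq0 h, smul_zero, zero_add]
    exact (mem_aug1 ρ).mp hwW1 h
  · -- W2 ≤ W3
    intro x hx
    rw [mem_aug3]
    intro g h k
    rw [(mem_aug2 ρ).mp hx h k, map_zero]
end
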